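/- (Yang–Yang bounds imply small-mass asymptotics) Suppose ε: ℝ → ℝ satisfies λ²/(2m) - h ≥ ε(λ) ≥ λ²/(2m) + x₀, where x₀ solves x₀ = -h - (T/(2π))∫_ℝ K(0,μ) ln(1 + e^{-(μ²/(2m)+x₀)/T}) dμ with K(0,μ) = 2c/(μ²+c²). Then x₀ = -h + O(√m) as m → 0 with c fixed, and hence ε(λ) = λ²/(2m) - h + O(√m). -/

import Mathlib

open MeasureTheory Real

/-!
Write `S = -x₀`, so that the equation reads `S - h = (T / 2π) ∫ K(μ) log (1 + e^{(S - μ²/2m)/T}) dμ`.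
Bounding the logarithm by `log 2` plus the positive part of its exponent and using `∫ K = 2π`,
the terms in `S` cancel and leave `∫ K(μ) min (S, μ²/2m) dμ ≤ 2π (T log 2 + h)`. Since `K` has
mass of order one on `[c, 2c]`, where `μ²/2m ≥ c²/2m` is huge for small `m`, this bounds `S`
uniformly in `m`. With `S` bounded, `log (1 + e^v) ≤ e^v` and `K ≤ 2/c` dominate the integrand by
a Gaussian of width `√(2mT)`, so `-(x₀ + h) = O(√m)`; the hypotheses on `ε` squeeze
`ε(λ) - (λ²/2m - h)` between `x₀ + h` and `0`.
-/

/-- The kernel `K(0, μ)` of the Yang–Yang equation. -/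
noncomputable def lorentzian (c μ : ℝ) : ℝ := 2 * c / (μ ^ 2 + c ^ 2)

section Lorentzian

variable {c : ℝ}

lemma lorentzian_pos (hc : 0 < c) (μ : ℝ) : 0 < lorentzian c μ := by
  unfold lorentzian; positivity

lemma lorentzian_le (hc : 0 < c) (μ : ℝ) : lorentzian c μ ≤ 2 / c := by
  calc lorentzian c μ ≤ 2 * c / c ^ 2 :=
        div_le_div_of_nonneg_left (by positivity) (by positivity) (by nlinarith [sq_nonneg μ])
    _ = 2 / c := by field_simp

lemma continuous_lorentzian (hc : 0 < c) : Continuous (lorentzian c) :=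
  continuous_const.div (by fun_prop) fun μ => by positivity

lemma lorentzian_eq_mul_inv_one_add_sq (hc : 0 < c) :
    lorentzian c = fun μ => 2 / c * (1 + (c⁻¹ * μ) ^ 2)⁻¹ := by
  funext μ
  unfold lorentzian
  field_simp
  ring

lemma integrable_lorentzian (hc : 0 < c) : Integrable (lorentzian c) := by
  rw [lorentzian_eq_mul_inv_one_add_sq hc]
  exact (integrable_inv_one_add_sq.comp_mul_left' (inv_ne_zero hc.ne')).const_mul _

lemma integral_lorentzian (hc : 0 < c) : ∫ μ, lorentzian c μ = 2 * π := by
  rw [lorentzian_eq_mul_inv_one_add_sq hc, integral_const_mul,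
    Measure.integral_comp_mul_left (fun x => (1 + x ^ 2)⁻¹) c⁻¹, integral_univ_inv_one_add_sq,
    inv_inv, abs_of_pos hc, smul_eq_mul]
  field_simp

end Lorentzian

lemma log_one_add_exp_nonneg (v : ℝ) : 0 ≤ log (1 + exp v) :=
  log_nonneg (by linarith [exp_pos v])

lemma log_one_add_exp_le_exp (v : ℝ) : log (1 + exp v) ≤ exp v := by
  linarith [log_le_sub_one_of_pos (show 0 < 1 + exp v by positivity)]

lemma log_one_add_exp_le_log_two_add_max (v : ℝ) : log (1 + exp v) ≤ log 2 + max v 0 := by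
  have h : 1 + exp v ≤ 2 * exp (max v 0) := by
    rcases le_total v 0 with hv | hv
    · rw [max_eq_right hv, exp_zero]; linarith [exp_le_one_iff.mpr hv]
    · rw [max_eq_left hv]; linarith [one_le_exp hv]
  calc log (1 + exp v) ≤ log (2 * exp (max v 0)) := log_le_log (by positivity) h
    _ = log 2 + max v 0 := by rw [log_mul two_ne_zero (exp_ne_zero _), log_exp]

/-- The integral in the Yang–Yang equation for the dressed energy `x₀ = ε(0)`. -/
noncomputable def yangYangIntegral (c T m x₀ : ℝ) : ℝ :=
  ∫ μ, lorentzian c μ * log (1 + exp (-(μ ^ 2 / (2 * m) + x₀) / T))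

section YangYangIntegral

variable {c T m : ℝ}

lemma yangYangIntegral_nonneg (hc : 0 < c) (x₀ : ℝ) : 0 ≤ yangYangIntegral c T m x₀ :=
  integral_nonneg fun μ => mul_nonneg (lorentzian_pos hc μ).le (log_one_add_exp_nonneg _)

lemma max_neg_add_div_zero (hT : 0 ≤ T) (u x₀ : ℝ) :
    max (-(u + x₀) / T) 0 = (-x₀ - min (-x₀) u) / T := by
  rcases le_total (-x₀) u with h | h
  · rw [min_eq_left h, sub_self, zero_div, max_eq_right]
    exact div_nonpos_of_nonpos_of_nonneg (by linarith) hT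
  · rw [min_eq_right h, max_eq_left (div_nonneg (by linarith) hT)]
    ring

lemma integrable_lorentzian_mul_min (hc : 0 < c) (hm : 0 ≤ m) (S : ℝ) :
    Integrable fun μ => lorentzian c μ * min S (μ ^ 2 / (2 * m)) := by
  refine ((integrable_lorentzian hc).mul_const |S|).mono'
    ((continuous_lorentzian hc).mul (by fun_prop)).aestronglyMeasurable
    (Filter.Eventually.of_forall fun μ => ?_)
  rw [norm_mul, Real.norm_of_nonneg (lorentzian_pos hc μ).le, Real.norm_eq_abs]
  refine mul_le_mul_of_nonneg_left (abs_le.mpr ⟨le_min (neg_abs_le S) ?_, ?_⟩)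
    (lorentzian_pos hc μ).le
  · exact (neg_nonpos.mpr (abs_nonneg S)).trans (by positivity)
  · exact (min_le_left _ _).trans (le_abs_self S)

lemma yangYangIntegral_le (hc : 0 < c) (hT : 0 ≤ T) (hm : 0 ≤ m) (x₀ : ℝ) :
    yangYangIntegral c T m x₀ ≤ 2 * π * (log 2 + -x₀ / T) -
      (∫ μ, lorentzian c μ * min (-x₀) (μ ^ 2 / (2 * m))) / T := by
  have hK := integrable_lorentzian hc
  have hKmin := integrable_lorentzian_mul_min hc hm (-x₀)
  calc yangYangIntegral c T m x₀
      ≤ ∫ μ, (log 2 + -x₀ / T) * lorentzian c μ -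
          lorentzian c μ * min (-x₀) (μ ^ 2 / (2 * m)) / T := by
        refine integral_mono_of_nonneg (Filter.Eventually.of_forall fun μ =>
          mul_nonneg (lorentzian_pos hc μ).le (log_one_add_exp_nonneg _))
          ((hK.const_mul _).sub (hKmin.div_const _)) (Filter.Eventually.of_forall fun μ => ?_)
        have hL := log_one_add_exp_le_log_two_add_max (-(μ ^ 2 / (2 * m) + x₀) / T)
        rw [max_neg_add_div_zero hT] at hL
        calc lorentzian c μ * log (1 + exp (-(μ ^ 2 / (2 * m) + x₀) / T))
            ≤ lorentzian c μ * (log 2 + (-x₀ - min (-x₀) (μ ^ 2 / (2 * m))) / T) :=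
              mul_le_mul_of_nonneg_left hL (lorentzian_pos hc μ).le
          _ = _ := by ring
    _ = _ := by
        rw [integral_sub (hK.const_mul _) (hKmin.div_const _), integral_const_mul,
          integral_div, integral_lorentzian hc]
        ring

lemma two_fifths_mul_min_le_integral_lorentzian_mul_min (hc : 0 < c) (hm : 0 ≤ m) {S : ℝ}
    (hS : 0 ≤ S) :
    2 / 5 * min S (c ^ 2 / (2 * m)) ≤ ∫ μ, lorentzian c μ * min S (μ ^ 2 / (2 * m)) := by
  have hbound : ∀ μ ∈ Set.Icc c (2 * c),
      2 / (5 * c) * min S (c ^ 2 / (2 * m)) ≤ lorentzian c μ * min S (μ ^ 2 / (2 * m)) := by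
    rintro μ ⟨hcμ, hμc⟩
    have hK : 2 / (5 * c) ≤ lorentzian c μ :=
      (div_le_div_iff₀ (by positivity) (by positivity)).mpr (by nlinarith)
    have hmin : min S (c ^ 2 / (2 * m)) ≤ min S (μ ^ 2 / (2 * m)) :=
      min_le_min_left S (by gcongr)
    exact mul_le_mul hK hmin (le_min hS (by positivity)) (lorentzian_pos hc μ).le
  calc 2 / 5 * min S (c ^ 2 / (2 * m))
      = ∫ _ in Set.Icc c (2 * c), 2 / (5 * c) * min S (c ^ 2 / (2 * m)) := by
        rw [setIntegral_const, Real.volume_real_Icc_of_le (by linarith), smul_eq_mul]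
        field_simp
        ring
    _ ≤ ∫ μ in Set.Icc c (2 * c), lorentzian c μ * min S (μ ^ 2 / (2 * m)) :=
        setIntegral_mono_on (integrableOn_const measure_Icc_lt_top.ne)
          (integrable_lorentzian_mul_min hc hm S).integrableOn measurableSet_Icc hbound
    _ ≤ ∫ μ, lorentzian c μ * min S (μ ^ 2 / (2 * m)) :=
        setIntegral_le_integral (integrable_lorentzian_mul_min hc hm S)
          (Filter.Eventually.of_forall fun μ =>
            mul_nonneg (lorentzian_pos hc μ).le (le_min hS (by positivity)))

lemma yangYangIntegral_le_gaussian (hc : 0 < c) (hT : 0 < T) (hm : 0 < m) (x₀ : ℝ) :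
    yangYangIntegral c T m x₀ ≤ 2 / c * exp (-x₀ / T) * √(2 * π * T) * √m := by
  have hb : 0 < 1 / (2 * T * m) := by positivity
  calc yangYangIntegral c T m x₀
      ≤ ∫ μ, 2 / c * exp (-x₀ / T) * exp (-(1 / (2 * T * m)) * μ ^ 2) := by
        refine integral_mono_of_nonneg (Filter.Eventually.of_forall fun μ =>
          mul_nonneg (lorentzian_pos hc μ).le (log_one_add_exp_nonneg _))
          ((integrable_exp_neg_mul_sq hb).const_mul _) (Filter.Eventually.of_forall fun μ => ?_)
        have hexp : -(μ ^ 2 / (2 * m) + x₀) / T = -x₀ / T + -(1 / (2 * T * m)) * μ ^ 2 := by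
          field_simp
          ring
        calc lorentzian c μ * log (1 + exp (-(μ ^ 2 / (2 * m) + x₀) / T))
            ≤ 2 / c * exp (-(μ ^ 2 / (2 * m) + x₀) / T) :=
              mul_le_mul (lorentzian_le hc μ) (log_one_add_exp_le_exp _)
                (log_one_add_exp_nonneg _) (by positivity)
          _ = _ := by rw [hexp, exp_add]; ring
    _ = 2 / c * exp (-x₀ / T) * √(2 * π * T) * √m := by
        have hvar : π / (1 / (2 * T * m)) = 2 * π * T * m := by field_simp
        rw [integral_const_mul, integral_gaussian, hvar, sqrt_mul (by positivity)]
        ring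

end YangYangIntegral

section FixedPoint

variable {c h T m x₀ : ℝ}

lemma add_nonpos_of_eq_yangYang (hc : 0 < c) (hT : 0 ≤ T)
    (heq : x₀ = -h - T / (2 * π) * yangYangIntegral c T m x₀) : x₀ + h ≤ 0 := by
  have : 0 ≤ T / (2 * π) * yangYangIntegral c T m x₀ :=
    mul_nonneg (by positivity) (yangYangIntegral_nonneg hc x₀)
  linarith

lemma neg_le_of_eq_yangYang (hc : 0 < c) (hh : 0 < h) (hT : 0 < T) (hm : 0 < m)
    (hm₀ : m ≤ c ^ 2 / (12 * π * (T * log 2 + h)))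
    (heq : x₀ = -h - T / (2 * π) * yangYangIntegral c T m x₀) :
    -x₀ ≤ 5 * π * (T * log 2 + h) := by
  set A := T * log 2 + h
  have hA : 0 < A := by have := log_pos one_lt_two; positivity
  set I := ∫ μ, lorentzian c μ * min (-x₀) (μ ^ 2 / (2 * m))
  have hdeficit : I ≤ 2 * π * A := by
    have hF := mul_le_mul_of_nonneg_left (yangYangIntegral_le hc hT.le hm.le x₀)
      (by positivity : 0 ≤ T / (2 * π))
    have hexpand : T / (2 * π) * (2 * π * (log 2 + -x₀ / T) - I / T) =
        T * log 2 - x₀ - I / (2 * π) := by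
      field_simp
      ring
    have : I / (2 * π) ≤ A := by linarith
    rwa [div_le_iff₀' (by positivity)] at this
  have hmin : min (-x₀) (c ^ 2 / (2 * m)) ≤ 5 * π * A := by
    have := two_fifths_mul_min_le_integral_lorentzian_mul_min hc hm.le
      (by linarith [add_nonpos_of_eq_yangYang hc hT.le heq] : 0 ≤ -x₀)
    linarith
  have hlarge : 5 * π * A < c ^ 2 / (2 * m) := by
    rw [le_div_iff₀ (by positivity)] at hm₀
    rw [lt_div_iff₀ (by positivity)]
    nlinarith [pi_pos]
  exact (min_le_iff.mp hmin).resolve_right hlarge.not_ge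

lemma neg_add_le_of_eq_yangYang (hc : 0 < c) (hh : 0 < h) (hT : 0 < T) (hm : 0 < m)
    (hm₀ : m ≤ c ^ 2 / (12 * π * (T * log 2 + h)))
    (heq : x₀ = -h - T / (2 * π) * yangYangIntegral c T m x₀) :
    -(x₀ + h) ≤ T / (π * c) * exp (5 * π * (T * log 2 + h) / T) * √(2 * π * T) * √m := by
  have hexp : exp (-x₀ / T) ≤ exp (5 * π * (T * log 2 + h) / T) := by
    gcongr
    exact neg_le_of_eq_yangYang hc hh hT hm hm₀ heq
  calc -(x₀ + h) = T / (2 * π) * yangYangIntegral c T m x₀ := by linarith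
    _ ≤ T / (2 * π) * (2 / c * exp (-x₀ / T) * √(2 * π * T) * √m) := by
        gcongr
        exact yangYangIntegral_le_gaussian hc hT hm x₀
    _ ≤ T / (2 * π) * (2 / c * exp (5 * π * (T * log 2 + h) / T) * √(2 * π * T) * √m) := by
        gcongr
    _ = T / (π * c) * exp (5 * π * (T * log 2 + h) / T) * √(2 * π * T) * √m := by
        field_simp

end FixedPoint

theorem yang_yang_small_mass (c h T : ℝ) (hc : 0 < c) (hh : 0 < h) (hT : 0 < T) :
    ∃ C > 0, ∃ m₀ > 0, ∀ m : ℝ, 0 < m → m ≤ m₀ →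
      ∀ x₀ : ℝ, ∀ ε : ℝ → ℝ,
        (x₀ = -h - (T / (2 * Real.pi)) * ∫ μ : ℝ, (2 * c / (μ ^ 2 + c ^ 2)) *
            Real.log (1 + Real.exp (-(μ ^ 2 / (2 * m) + x₀) / T))) →
        (∀ l : ℝ, ε l ≤ l ^ 2 / (2 * m) - h ∧ l ^ 2 / (2 * m) + x₀ ≤ ε l) →
        |x₀ + h| ≤ C * Real.sqrt m ∧
          ∀ l : ℝ, |ε l - (l ^ 2 / (2 * m) - h)| ≤ C * Real.sqrt m := by
  have hA : 0 < T * log 2 + h := by have := log_pos one_lt_two; positivity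
  set C := T / (π * c) * exp (5 * π * (T * log 2 + h) / T) * √(2 * π * T)
  have hC : 0 < C := by positivity
  refine ⟨C, hC, c ^ 2 / (12 * π * (T * log 2 + h)), by positivity, ?_⟩
  intro m hm hm₀ x₀ ε heq hε
  have hupper := add_nonpos_of_eq_yangYang hc hT.le heq
  have hlower := neg_add_le_of_eq_yangYang hc hh hT hm hm₀ heq
  have hCm : 0 ≤ C * √m := by positivity
  refine ⟨abs_le.mpr ⟨by linarith, by linarith⟩, fun l => ?_⟩
  obtain ⟨hε_upper, hε_lower⟩ := hε l
  exact abs_le.mpr ⟨by linarith, by linarith⟩
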